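/- arXiv:2002.02485 — 2 statements merged into one kernel-verified Lean document; each statement's English description precedes it below -/
import Mathlib

section
/- Let G be a topological group generated by a compact symmetric subset Q with 1 ∈ Q, and let |·|_Q be the associated word length. Let π be a unitary representation of G on a complex Hilbert space H, and let b, b' : G → H be 1-cocycles over π such that b has sublinear growth with respect to |·|_Q and the difference g ↦ b'(g) − b(g) is an almost coboundary. Then b' has sublinear growth with respect to |·|_Q. -/
open MeasureTheory Filter Topology
open scoped Pointwise

/-- The word length of `g` with respect to a generating set `Q` (symmetric, containing `1`):
the least `n` such that `g` is a product of `n` elements of `Q`. -/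
noncomputable def wordLength {G : Type*} [Group G] (Q : Set G) (g : G) : ℕ :=
  sInf {n : ℕ | g ∈ Q ^ n}

/-- A map `b : G → H` into a normed space has sublinear growth with respect to the word
length `|·|_Q` if for every `ε > 0` there is `N` with `‖b g‖ < ε * |g|_Q` whenever `|g|_Q > N`. -/
def HasSublinearGrowth {G : Type*} [Group G] {H : Type*} [NormedAddCommGroup H]
    (Q : Set G) (b : G → H) : Prop :=
  ∀ ε : ℝ, 0 < ε → ∃ N : ℕ, ∀ g : G, N < wordLength Q g →
    ‖b g‖ < ε * (wordLength Q g : ℝ)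

/-- `b` is an almost coboundary over `π`: it lies in the closure of the set of coboundaries
`g ↦ π g v - v` in the topology of uniform convergence on compact sets. -/
def IsAlmostCoboundary {G : Type*} [Group G] [TopologicalSpace G]
    {H : Type*} [NormedAddCommGroup H] [InnerProductSpace ℂ H]
    (π : G →* (H ≃ₗᵢ[ℂ] H)) (b : G → H) : Prop :=
  ∀ K : Set G, IsCompact K → ∀ ε : ℝ, 0 < ε → ∃ v : H,
    ∀ g ∈ K, ‖b g - (π g v - v)‖ < ε

/-!
Write `c = b' - b`, again a cocycle. For `ε > 0` pick `v` with `c` within `ε` of the coboundary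
`g ↦ π g v - v` on `Q`. The cocycle `c - (π · v - v)` is then at most `ε` on `Q`, hence at most
`ε |g|_Q` at `g` by the cocycle identity, while the coboundary is bounded by `2 ‖v‖`. So
`‖c g‖ ≤ ε |g|_Q + 2 ‖v‖` for every `ε`, i.e. `c` grows sublinearly, and so does `b' = b + c`.
-/

/-- Since `sInf ∅ = 0`, a positive word length is always attained. -/
theorem mem_pow_wordLength {G : Type*} [Group G] {Q : Set G} {g : G}
    (hg : wordLength Q g ≠ 0) : g ∈ Q ^ wordLength Q g :=
  Nat.sInf_mem <| Set.nonempty_iff_ne_empty.2 fun h => hg <| Nat.sInf_eq_zero.2 (Or.inr h)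

section Cocycle

variable {G : Type*} [Group G] {𝕜 : Type*} [Semiring 𝕜]
  {H : Type*} [SeminormedAddCommGroup H] [Module 𝕜 H] (π : G →* (H ≃ₗᵢ[𝕜] H))

def IsCocycle (b : G → H) : Prop :=
  ∀ g h : G, b (g * h) = b g + π g (b h)

variable {π}

theorem IsCocycle.map_one {b : G → H} (hb : IsCocycle π b) : b 1 = 0 := by
  simpa using hb 1 1

theorem IsCocycle.sub {b b' : G → H} (hb' : IsCocycle π b') (hb : IsCocycle π b) :
    IsCocycle π (b' - b) := by
  intro g h
  simp only [Pi.sub_apply, hb' g h, hb g h, map_sub]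
  abel

theorem isCocycle_coboundary (v : H) : IsCocycle π fun g => π g v - v := by
  intro g h
  simp only [map_mul, LinearIsometryEquiv.coe_mul, Function.comp_apply, map_sub]
  abel

theorem norm_coboundary_le (g : G) (v : H) : ‖π g v - v‖ ≤ 2 * ‖v‖ :=
  (norm_sub_le _ _).trans_eq <| by rw [LinearIsometryEquiv.norm_map, two_mul]

theorem IsCocycle.norm_le_of_mem_pow {b : G → H} (hb : IsCocycle π b) {Q : Set G} {M : ℝ}
    (hM : ∀ q ∈ Q, ‖b q‖ ≤ M) (n : ℕ) {g : G} (hg : g ∈ Q ^ n) : ‖b g‖ ≤ n * M := by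
  induction n generalizing g with
  | zero =>
    rw [pow_zero, Set.mem_one] at hg
    simp [hg, hb.map_one]
  | succ n ih =>
    obtain ⟨a, ha, q, hq, rfl⟩ := (pow_succ Q n ▸ hg :)
    calc ‖b (a * q)‖ ≤ ‖b a‖ + ‖π a (b q)‖ := hb a q ▸ norm_add_le _ _
      _ ≤ n * M + M := by
        rw [LinearIsometryEquiv.norm_map]
        exact add_le_add (ih ha) (hM q hq)
      _ = (n + 1 : ℕ) * M := by push_cast; ring

end Cocycle

section SublinearGrowth

variable {G : Type*} [Group G] {H : Type*} [NormedAddCommGroup H] {Q : Set G}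

theorem hasSublinearGrowth_of_forall_le_mul_add {b : G → H}
    (hb : ∀ ε > 0, ∃ C : ℝ, ∀ g, wordLength Q g ≠ 0 → ‖b g‖ ≤ ε * wordLength Q g + C) :
    HasSublinearGrowth Q b := by
  intro ε hε
  obtain ⟨C, hC⟩ := hb (ε / 2) (half_pos hε)
  refine ⟨⌈2 * C / ε⌉₊, fun g hg => ?_⟩
  have hCg : 2 * C / ε < wordLength Q g := (Nat.le_ceil _).trans_lt (mod_cast hg)
  have : 2 * C < ε * wordLength Q g := (div_lt_iff₀' hε).1 hCg
  linarith [hC g (by omega)]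

theorem HasSublinearGrowth.add {b c : G → H} (hb : HasSublinearGrowth Q b)
    (hc : HasSublinearGrowth Q c) : HasSublinearGrowth Q (b + c) := by
  intro ε hε
  obtain ⟨N₁, hN₁⟩ := hb (ε / 2) (half_pos hε)
  obtain ⟨N₂, hN₂⟩ := hc (ε / 2) (half_pos hε)
  refine ⟨max N₁ N₂, fun g hg => ?_⟩
  calc ‖b g + c g‖ ≤ ‖b g‖ + ‖c g‖ := norm_add_le _ _
    _ < ε / 2 * wordLength Q g + ε / 2 * wordLength Q g :=
      add_lt_add (hN₁ g ((le_max_left _ _).trans_lt hg)) (hN₂ g ((le_max_right _ _).trans_lt hg))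
    _ = ε * wordLength Q g := by ring

end SublinearGrowth

theorem IsCocycle.hasSublinearGrowth_of_isAlmostCoboundary {G : Type*} [Group G]
    [TopologicalSpace G] {Q : Set G} (hQ : IsCompact Q)
    {H : Type*} [NormedAddCommGroup H] [InnerProductSpace ℂ H] {π : G →* (H ≃ₗᵢ[ℂ] H)}
    {c : G → H} (hc : IsCocycle π c) (hc' : IsAlmostCoboundary π c) :
    HasSublinearGrowth Q c := by
  refine hasSublinearGrowth_of_forall_le_mul_add fun ε hε => ?_
  obtain ⟨v, hv⟩ := hc' Q hQ ε hε
  have hd : IsCocycle π (c - fun g => π g v - v) := hc.sub (isCocycle_coboundary v)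
  refine ⟨2 * ‖v‖, fun g hg => ?_⟩
  calc ‖c g‖ = ‖(c g - (π g v - v)) + (π g v - v)‖ := by rw [sub_add_cancel]
    _ ≤ ‖c g - (π g v - v)‖ + ‖π g v - v‖ := norm_add_le _ _
    _ ≤ wordLength Q g * ε + 2 * ‖v‖ :=
      add_le_add (hd.norm_le_of_mem_pow (fun q hq => (hv q hq).le) _ (mem_pow_wordLength hg))
        (norm_coboundary_le g v)
    _ = ε * wordLength Q g + 2 * ‖v‖ := by ring

theorem hasSublinearGrowth_of_almostCohomologous_general
    {G : Type*} [Group G] [TopologicalSpace G]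
    (Q : Set G) (hQcomp : IsCompact Q)
    {H : Type*} [NormedAddCommGroup H] [InnerProductSpace ℂ H]
    (π : G →* (H ≃ₗᵢ[ℂ] H))
    (b b' : G → H)
    (hbcoc : ∀ g h : G, b (g * h) = b g + π g (b h))
    (hb'coc : ∀ g h : G, b' (g * h) = b' g + π g (b' h))
    (hbsub : HasSublinearGrowth Q b)
    (hdiff : IsAlmostCoboundary π fun g => b' g - b g) :
    HasSublinearGrowth Q b' := by
  have hc : IsCocycle π (b' - b) := IsCocycle.sub hb'coc hbcoc
  simpa using hbsub.add (hc.hasSublinearGrowth_of_isAlmostCoboundary hQcomp hdiff)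

/-- If `b` has sublinear growth and `b' - b` is an almost coboundary, then the 1-cocycle `b'`
has sublinear growth. -/
theorem hasSublinearGrowth_of_almostCohomologous
    {G : Type*} [Group G] [TopologicalSpace G] [IsTopologicalGroup G]
    (Q : Set G) (hQcomp : IsCompact Q) (hQsymm : Q⁻¹ = Q) (hQone : (1 : G) ∈ Q)
    (hQgen : Subgroup.closure Q = ⊤)
    {H : Type*} [NormedAddCommGroup H] [InnerProductSpace ℂ H] [CompleteSpace H]
    (π : G →* (H ≃ₗᵢ[ℂ] H)) (hπ : ∀ v : H, Continuous fun g : G => π g v)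
    (b b' : G → H) (hbcont : Continuous b) (hb'cont : Continuous b')
    (hbcoc : ∀ g h : G, b (g * h) = b g + π g (b h))
    (hb'coc : ∀ g h : G, b' (g * h) = b' g + π g (b' h))
    (hbsub : HasSublinearGrowth Q b)
    (hdiff : IsAlmostCoboundary π fun g => b' g - b g) :
    HasSublinearGrowth Q b' :=
  hasSublinearGrowth_of_almostCohomologous_general Q hQcomp π b b' hbcoc hb'coc hbsub hdiff
end

section
/- Let G be a Hausdorff topological group generated by a compact symmetric subset Q with 1 ∈ Q, and let Γ ≤ G be a closed discrete subgroup generated by a finite symmetric subset W ⊆ Q with 1 ∈ W. Let π be a unitary representation of G on a complex Hilbert space H and let c : G → H be a 1-cocycle over π with sublinear growth with respect to |·|_Q. Then the restriction c|_Γ : Γ → H, a 1-cocycle over π|_Γ, has sublinear growth with respect to the word length |·|_W on Γ. -/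
/-!
Since `W ⊆ Q`, every `γ ∈ Γ` satisfies `|γ|_Q ≤ |γ|_W`. Given `ε`, sublinear growth of `c` gives
`‖c g‖ < ε |g|_Q` once `|g|_Q > N`, and this bound carries over to `Γ`. The remaining elements of
`Γ` with `|γ|_Q ≤ N` lie in the compact set `Q ^ N`, which meets the closed discrete subgroup `Γ`
in a finite set; so `‖c γ‖` is bounded there by a constant `C`, and `C < ε |γ|_W` as soon as
`|γ|_W > C / ε`.
-/

open MeasureTheory Filter Topology
open scoped Pointwise

section WordLength

variable {G : Type*} [Group G] {Q : Set G} {g : G} {n : ℕ}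

theorem wordLength_le_of_mem_pow (h : g ∈ Q ^ n) : wordLength Q g ≤ n :=
  Nat.sInf_le h

theorem mem_pow_wordLength_s6 (h : g ∈ Q ^ n) : g ∈ Q ^ wordLength Q g :=
  Nat.sInf_mem (s := {n | g ∈ Q ^ n}) ⟨n, h⟩

theorem mem_pow_wordLength_of_pos (h : 0 < wordLength Q g) : g ∈ Q ^ wordLength Q g :=
  Nat.sInf_mem (Nat.nonempty_of_pos_sInf h)

theorem mem_pow_of_wordLength_le {m : ℕ} (hQ : (1 : G) ∈ Q) (h : g ∈ Q ^ n)
    (hm : wordLength Q g ≤ m) : g ∈ Q ^ m :=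
  Set.pow_subset_pow_right hQ hm (mem_pow_wordLength_s6 h)

theorem MonoidHom.map_mem_pow_wordLength_of_pos {Γ : Type*} [Group Γ] {W : Set Γ} {γ : Γ}
    (f : Γ →* G) (hf : f '' W ⊆ Q) (h : 0 < wordLength W γ) :
    f γ ∈ Q ^ wordLength W γ := by
  have := Set.mem_image_of_mem f (mem_pow_wordLength_of_pos h)
  rw [Set.image_pow] at this
  exact Set.pow_subset_pow_left hf this

end WordLength

theorem HasSublinearGrowth.comp_monoidHom {G Γ H : Type*} [Group G] [Group Γ]
    [NormedAddCommGroup H] {Q : Set G} {W : Set Γ} {b : G → H} (hb : HasSublinearGrowth Q b)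
    (hQ : (1 : G) ∈ Q) (f : Γ →* G) (hf : f '' W ⊆ Q)
    (hbdd : ∀ n : ℕ, BddAbove ((fun γ => ‖b (f γ)‖) '' (f ⁻¹' (Q ^ n)))) :
    HasSublinearGrowth W (b ∘ f) := by
  intro ε hε
  obtain ⟨N, hN⟩ := hb ε hε
  obtain ⟨C, hC⟩ := hbdd N
  refine ⟨max N ⌈C / ε⌉₊, fun γ hγ => ?_⟩
  have hfγ : f γ ∈ Q ^ wordLength W γ := f.map_mem_pow_wordLength_of_pos hf (by omega)
  rcases le_or_gt (wordLength Q (f γ)) N with hsmall | hlarge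
  · have hbC : ‖b (f γ)‖ ≤ C := hC ⟨γ, mem_pow_of_wordLength_le hQ hfγ hsmall, rfl⟩
    have hCε : C / ε < wordLength W γ :=
      (Nat.le_ceil _).trans_lt (by exact_mod_cast (le_max_right _ _).trans_lt hγ)
    calc ‖b (f γ)‖ ≤ C := hbC
      _ < ε * wordLength W γ := by rwa [div_lt_iff₀' hε] at hCε
  · have hlen : (wordLength Q (f γ) : ℝ) ≤ wordLength W γ := by
      exact_mod_cast wordLength_le_of_mem_pow hfγ
    calc ‖b (f γ)‖ < ε * wordLength Q (f γ) := hN _ hlarge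
      _ ≤ ε * wordLength W γ := by gcongr

theorem IsCompact.pow {M : Type*} [Monoid M] [TopologicalSpace M] [ContinuousMul M]
    {s : Set M} (hs : IsCompact s) : ∀ n : ℕ, IsCompact (s ^ n)
  | 0 => by simp
  | n + 1 => by rw [pow_succ]; exact (hs.pow n).mul hs

theorem IsClosed.finite_preimage_coe_of_isCompact {X : Type*} [TopologicalSpace X] {s : Set X}
    (hs : IsClosed s) [DiscreteTopology s] {K : Set X} (hK : IsCompact K) :
    (((↑) : s → X) ⁻¹' K).Finite :=
  tendsto_cofinite_cocompact_iff.mp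
    (hs.tendsto_coe_cofinite_of_isDiscrete (isDiscrete_iff_discreteTopology.mpr ‹_›)) K hK

theorem restriction_to_lattice_hasSublinearGrowth_general
    {G : Type*} [Group G] [TopologicalSpace G] [IsTopologicalGroup G]
    (Q : Set G) (hQcomp : IsCompact Q) (hQone : (1 : G) ∈ Q)
    (Γ : Subgroup G) (hΓclosed : IsClosed (Γ : Set G)) (hΓdisc : DiscreteTopology Γ)
    (W : Set Γ)
    (hWQ : ((↑) : Γ → G) '' W ⊆ Q)
    {H : Type*} [NormedAddCommGroup H]
    (c : G → H)
    (hcsub : HasSublinearGrowth Q c) :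
    HasSublinearGrowth W (fun γ : Γ => c ↑γ) :=
  hcsub.comp_monoidHom hQone Γ.subtype hWQ fun n =>
    ((hΓclosed.finite_preimage_coe_of_isCompact (hQcomp.pow n)).image _).bddAbove

/-- If a 1-cocycle `c` over a unitary representation of a compactly generated group `G` has
sublinear growth with respect to `|·|_Q`, then its restriction to a closed discrete subgroup
`Γ` generated by a finite symmetric set `W ⊆ Q` has sublinear growth with respect to
`|·|_W`. -/
theorem restriction_to_lattice_hasSublinearGrowth
    {G : Type*} [Group G] [TopologicalSpace G] [IsTopologicalGroup G] [T2Space G]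
    (Q : Set G) (hQcomp : IsCompact Q) (hQsymm : Q⁻¹ = Q) (hQone : (1 : G) ∈ Q)
    (hQgen : Subgroup.closure Q = ⊤)
    (Γ : Subgroup G) (hΓclosed : IsClosed (Γ : Set G)) (hΓdisc : DiscreteTopology Γ)
    (W : Set Γ) (hWfin : W.Finite) (hWsymm : W⁻¹ = W) (hWone : (1 : Γ) ∈ W)
    (hWgen : Subgroup.closure W = ⊤)
    (hWQ : ((↑) : Γ → G) '' W ⊆ Q)
    {H : Type*} [NormedAddCommGroup H] [InnerProductSpace ℂ H] [CompleteSpace H]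
    (π : G →* (H ≃ₗᵢ[ℂ] H)) (hπ : ∀ v : H, Continuous fun g : G => π g v)
    (c : G → H) (hccont : Continuous c)
    (hccoc : ∀ g h : G, c (g * h) = c g + π g (c h))
    (hcsub : HasSublinearGrowth Q c) :
    HasSublinearGrowth W (fun γ : Γ => c ↑γ) :=
  restriction_to_lattice_hasSublinearGrowth_general Q hQcomp hQone Γ hΓclosed hΓdisc W hWQ c hcsub
end
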